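/- Let c ≤ d be natural numbers and let k ≤ c. Consider the complete bipartite graph K_{d,c} with parts of sizes d and c. If 𝔐 is a family of matchings of size k in K_{d,c} such that the union of any two distinct members of 𝔐 is not a matching (pairwise incompatible), then |𝔐| ≤ d!/(d-k)!. -/

import Mathlib

/-!
Every `k`-matching of `K_{d,c}` extends to at least `(d-k)!/(d-c)!` embeddings of the
`c`-side into the `d`-side (send the `c - k` unmatched vertices injectively into the
`d - k` unmatched ones), and two matchings with a common extension are compatible.
So the extension sets of the members of `𝔐` are disjoint inside the `d!/(d-c)!`
embeddings, and `|𝔐| ≤ (d!/(d-c)!) / ((d-k)!/(d-c)!) = d!/(d-k)!`.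
-/

variable {α β : Type} [DecidableEq α] [DecidableEq β]

/-- A finite set of pairs is (the graph of) a partial injection. -/
def IsPartialInj (s : Finset (α × β)) : Prop :=
  ∀ p ∈ s, ∀ q ∈ s, (p.1 = q.1 → p.2 = q.2) ∧ (p.2 = q.2 → p.1 = q.1)

/-- Two conditions are compatible if their union is still a partial injection. -/
def Compatible (σ τ : Finset (α × β)) : Prop := IsPartialInj (σ ∪ τ)

open Finset Function

namespace Function.Embedding

variable {X Y Z : Type*}

open scoped Classical in
noncomputable def extendAlong (ι : Z ↪ Y) (f : Z ↪ X) (e : ↥(Set.range ι)ᶜ ↪ ↥(Set.range f)ᶜ) :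
    Y ↪ X :=
  (Equiv.sumCompl (· ∈ Set.range ι)).symm.toEmbedding.trans
    ((Embedding.sumMap
        ((Equiv.ofInjective ι ι.injective).symm.trans (Equiv.ofInjective f f.injective)).toEmbedding
        e).trans
      (Equiv.sumCompl (· ∈ Set.range f)).toEmbedding)

variable (ι : Z ↪ Y) (f : Z ↪ X) (e : ↥(Set.range ι)ᶜ ↪ ↥(Set.range f)ᶜ)

theorem extendAlong_apply_self (z : Z) : extendAlong ι f e (ι z) = f z := by
  classical
  simp [extendAlong, Equiv.sumCompl_symm_apply_of_pos (Set.mem_range_self z)]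
  rfl

theorem extendAlong_apply_compl (y : ↥(Set.range ι)ᶜ) : extendAlong ι f e y = e y := by
  classical
  simp [extendAlong, Equiv.sumCompl_symm_apply_of_neg y.2]
  rfl

theorem extendAlong_injective : Injective (extendAlong ι f) := fun e₁ e₂ h ↦
  ext fun y ↦ Subtype.ext <| by
    rw [← extendAlong_apply_compl ι f, ← extendAlong_apply_compl ι f, h]

theorem descFactorial_le_card_extensions [Fintype X] [Fintype Y] [Fintype Z] [DecidableEq X] :
    (Fintype.card X - Fintype.card Z).descFactorial (Fintype.card Y - Fintype.card Z) ≤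
      #{g : Y ↪ X | ∀ z, g (ι z) = f z} := by
  classical
  calc (Fintype.card X - Fintype.card Z).descFactorial (Fintype.card Y - Fintype.card Z)
      = Fintype.card (↥(Set.range ι)ᶜ ↪ ↥(Set.range f)ᶜ) := by
        rw [Fintype.card_embedding_eq, Fintype.card_compl_set, Fintype.card_compl_set,
          Set.card_range_of_injective f.injective, Set.card_range_of_injective ι.injective]
    _ ≤ #{g : Y ↪ X | ∀ z, g (ι z) = f z} :=
        card_le_card_of_injOn (extendAlong ι f)
          (fun e _ ↦ mem_filter.2 ⟨mem_univ _, extendAlong_apply_self ι f e⟩)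
          (extendAlong_injective ι f).injOn

end Function.Embedding

namespace IsPartialInj

variable {X Y : Type} {σ : Finset (X × Y)}

def fstEmbedding (hσ : IsPartialInj σ) : σ ↪ X :=
  ⟨fun p ↦ p.1.1, fun p q h ↦ Subtype.ext <| Prod.ext h <| (hσ p p.2 q q.2).1 h⟩

def sndEmbedding (hσ : IsPartialInj σ) : σ ↪ Y :=
  ⟨fun p ↦ p.1.2, fun p q h ↦ Subtype.ext <| Prod.ext ((hσ p p.2 q q.2).2 h) h⟩

theorem descFactorial_le_card_extensions [Fintype X] [Fintype Y] [DecidableEq X]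
    (hσ : IsPartialInj σ) :
    (Fintype.card X - #σ).descFactorial (Fintype.card Y - #σ) ≤
      #{g : Y ↪ X | ∀ p ∈ σ, g p.2 = p.1} := by
  have h := Embedding.descFactorial_le_card_extensions hσ.sndEmbedding hσ.fstEmbedding
  rw [Fintype.card_coe] at h
  convert h using 3 with g
  exact ⟨fun H z ↦ H z z.2, fun H p hp ↦ H ⟨p, hp⟩⟩

theorem of_forall_apply_eq (g : Y ↪ X) (hg : ∀ p ∈ σ, g p.2 = p.1) : IsPartialInj σ :=
  fun p hp q hq ↦ ⟨fun h ↦ g.injective ((hg p hp).trans (h.trans (hg q hq).symm)),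
    fun h ↦ (hg p hp).symm.trans (h ▸ hg q hq)⟩

end IsPartialInj

/-- a family of pairwise incompatible `k`-matchings in the complete
bipartite graph `K_{d,c}` (with `k ≤ c ≤ d`) has size at most `d!/(d-k)!`. -/
theorem pairwise_incompatible_matchings_card_le
    (d c k : ℕ) (hkc : k ≤ c) (hcd : c ≤ d)
    (𝔐 : Finset (Finset (Fin d × Fin c)))
    (hmatch : ∀ σ ∈ 𝔐, IsPartialInj σ ∧ σ.card = k)
    (hincomp : ∀ σ ∈ 𝔐, ∀ τ ∈ 𝔐, σ ≠ τ → ¬ Compatible σ τ) :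
    𝔐.card ≤ d.descFactorial k := by
  have hcount : #𝔐 * (d - k).descFactorial (c - k) ≤ #(univ : Finset (Fin c ↪ Fin d)) * 1 := by
    refine card_mul_le_card_mul (fun σ g ↦ ∀ p ∈ σ, g p.2 = p.1) (fun σ hσ ↦ ?_) (fun g _ ↦ ?_)
    · obtain ⟨hinj, hcard⟩ := hmatch σ hσ
      simpa [bipartiteAbove, hcard] using hinj.descFactorial_le_card_extensions
    · refine card_le_one.2 fun σ hσ τ hτ ↦ ?_
      rw [mem_bipartiteBelow] at hσ hτ
      by_contra hne
      exact hincomp σ hσ.1 τ hτ.1 hne <| IsPartialInj.of_forall_apply_eq g fun p hp ↦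
        (mem_union.1 hp).elim (hσ.2 p) (hτ.2 p)
  rw [card_univ, Fintype.card_embedding_eq, Fintype.card_fin, Fintype.card_fin,
    ← Nat.descFactorial_mul_descFactorial hkc, mul_one, mul_comm] at hcount
  exact Nat.le_of_mul_le_mul_left hcount (Nat.descFactorial_pos.2 (Nat.sub_le_sub_right hcd k))
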